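/- arXiv:1803.06038 — 3 statements merged into one kernel-verified Lean document; each statement's English description precedes it below -/
import Mathlib

section
/- Let Φ > 0, δ₁, δ₂ > 0, β > 1, and let W₁ be continuous nonnegative nondecreasing vanishing on the negatives. With l(x;b) = ∫_x^b e^{-Φz} W₁(z-x) dz, define for 0 < a ≤ b the function γ̃(a,b) = Φ δ₂ ( e^{-Φb} β - e^{-Φa} - δ₁ Φ l(a;b) ). Then a ↦ γ̃(a,b) is strictly increasing on (0,b), and γ̃(b,b) = Φ δ₂ e^{-Φb} (β - 1) > 0. -/
/-! Since `exp (-Φ a)` is strictly decreasing, it suffices that `l` is nonincreasing in its lower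
limit `x ≤ b`: raising `x` both shortens the interval of integration of a nonnegative integrand and,
`W₁` being monotone, lowers the integrand `W₁ (z - x)` pointwise. At `a = b` the integral vanishes. -/

open MeasureTheory intervalIntegral Real Set

theorem antitoneOn_integral_mul_comp_sub {f W : ℝ → ℝ} (hf : Continuous f) (hf₀ : 0 ≤ f)
    (hW : Continuous W) (hW₀ : 0 ≤ W) (hW_mono : Monotone W) (b : ℝ) :
    AntitoneOn (fun x => ∫ z in x..b, f z * W (z - x)) (Iic b) := by
  intro x₁ _ x₂ hx₂ h₁₂
  have hint : ∀ x, Continuous fun z => f z * W (z - x) := fun x =>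
    hf.mul (hW.comp (continuous_id.sub continuous_const))
  calc ∫ z in x₂..b, f z * W (z - x₂)
      ≤ ∫ z in x₂..b, f z * W (z - x₁) :=
        integral_mono_on hx₂ ((hint x₂).intervalIntegrable _ _) ((hint x₁).intervalIntegrable _ _)
          fun z _ => mul_le_mul_of_nonneg_left (hW_mono (by linarith)) (hf₀ z)
    _ ≤ ∫ z in x₁..b, f z * W (z - x₁) :=
        integral_mono_interval h₁₂ hx₂ le_rfl
          (Filter.Eventually.of_forall fun z => mul_nonneg (hf₀ z) (hW₀ _))
          ((hint x₁).intervalIntegrable _ _)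

theorem stmt5_general (Φ δ₁ δ₂ β : ℝ) (hΦ : 0 < Φ) (hδ₁ : 0 < δ₁) (hδ₂ : 0 < δ₂) (hβ : 1 < β)
    (W₁ : ℝ → ℝ)
    (hW₁c : Continuous W₁) (hW₁nn : ∀ y, 0 ≤ W₁ y) (hW₁mono : Monotone W₁)
    (b : ℝ)
    (l : ℝ → ℝ) (hl : ∀ x, l x = ∫ z in x..b, Real.exp (-Φ * z) * W₁ (z - x))
    (γt : ℝ → ℝ)
    (hγt : ∀ a, γt a = Φ * δ₂ * (Real.exp (-Φ * b) * β - Real.exp (-Φ * a) - δ₁ * Φ * l a)) :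
    StrictMonoOn γt (Ioo 0 b) ∧
      γt b = Φ * δ₂ * Real.exp (-Φ * b) * (β - 1) ∧ 0 < γt b := by
  have hl_anti : AntitoneOn l (Iic b) := by
    simpa only [← hl] using antitoneOn_integral_mul_comp_sub (by fun_prop)
      (fun z => (exp_pos (-Φ * z)).le) hW₁c hW₁nn hW₁mono b
  have hlb : l b = 0 := by rw [hl, integral_same]
  refine ⟨fun a₁ ha₁ a₂ ha₂ h₁₂ => ?_, by rw [hγt, hlb]; ring, ?_⟩
  · have hexp : exp (-Φ * a₂) < exp (-Φ * a₁) := exp_lt_exp.mpr (by nlinarith)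
    have hl₁₂ : δ₁ * Φ * l a₂ ≤ δ₁ * Φ * l a₁ := by
      gcongr
      exact hl_anti (mem_Iic.2 ha₁.2.le) (mem_Iic.2 ha₂.2.le) h₁₂.le
    rw [hγt, hγt]
    exact mul_lt_mul_of_pos_left (by linarith) (by positivity)
  · rw [hγt, hlb, mul_zero, sub_zero, ← mul_sub_one]
    have : 0 < β - 1 := by linarith
    positivity

theorem stmt5 (Φ δ₁ δ₂ β : ℝ) (hΦ : 0 < Φ) (hδ₁ : 0 < δ₁) (hδ₂ : 0 < δ₂) (hβ : 1 < β)
    (W₁ : ℝ → ℝ)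
    (hW₁c : Continuous W₁) (hW₁nn : ∀ y, 0 ≤ W₁ y) (hW₁mono : Monotone W₁)
    (hW₁z : ∀ y < (0:ℝ), W₁ y = 0)
    (b : ℝ) (hb : 0 < b)
    (l : ℝ → ℝ) (hl : ∀ x, l x = ∫ z in x..b, Real.exp (-Φ * z) * W₁ (z - x))
    (γt : ℝ → ℝ)
    (hγt : ∀ a, γt a = Φ * δ₂ * (Real.exp (-Φ * b) * β - Real.exp (-Φ * a) - δ₁ * Φ * l a)) :
    StrictMonoOn γt (Ioo 0 b) ∧
      γt b = Φ * δ₂ * Real.exp (-Φ * b) * (β - 1) ∧ 0 < γt b :=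
  stmt5_general Φ δ₁ δ₂ β hΦ hδ₁ hδ₂ hβ W₁ hW₁c hW₁nn hW₁mono b l hl γt hγt
end

section
/- Let Φ, δ₁ > 0, b > 0 and W₁ continuous, nonnegative, nondecreasing, vanishing on the negatives. Define v'(x) = e^{-Φ(x-b)} + δ₁ Φ e^{Φb} l(x;b) for x > a, where l(x;b) = ∫_x^b e^{-Φz} W₁(z-x) dz (so l(x;b) = 0 for x ≥ b). Then v''(x) = -Φ e^{-Φ(x-b)} + δ₁ Φ e^{Φb} l'(x;b) ≤ -Φ e^{-Φ(x-b)} < 0, so x ↦ v'(x) is strictly decreasing on (a,∞); moreover v'(b) = 1 and v'(x) < 1 for x > b. -/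
open Set Real MeasureTheory intervalIntegral

/- The derivative of `v'` is the derivative `-Φ e^{-Φ(x-b)}` of its exponential part plus a
nonnegative multiple of `l' ≤ 0`, hence negative everywhere, which makes `v'` strictly decreasing.
Past `b` the kernel `W₁(z - x)` only sees negative arguments, so `l` vanishes there and `v'` reduces
to `e^{-Φ(x-b)}`, which equals `1` at `b` and is below `1` afterwards. -/

theorem integral_mul_comp_sub_eq_zero_of_le {f W : ℝ → ℝ} (hW : ∀ y < 0, W y = 0) {x b : ℝ}
    (hbx : b ≤ x) : ∫ z in x..b, f z * W (z - x) = 0 := by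
  -- `W 0` need not vanish, so the endpoint `z = x` is discarded as a null set.
  rw [integral_symm, integral_of_le hbx, integral_Ioc_eq_integral_Ioo, neg_eq_zero]
  refine setIntegral_eq_zero_of_forall_eq_zero fun z hz => ?_
  rw [hW (z - x) (sub_neg.mpr hz.2), mul_zero]

theorem hasDerivAt_exp_neg_mul_sub_add_const_mul {Φ b c l' x : ℝ} {l : ℝ → ℝ}
    (hl : HasDerivAt l l' x) :
    HasDerivAt (fun x => exp (-Φ * (x - b)) + c * l x)
      (-Φ * exp (-Φ * (x - b)) + c * l') x := by
  have hexp : HasDerivAt (fun x => exp (-Φ * (x - b))) (exp (-Φ * (x - b)) * -Φ) x := by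
    simpa using (((hasDerivAt_id x).sub_const b).const_mul (-Φ)).exp
  exact (hexp.add (hl.const_mul c)).congr_deriv (by ring)

theorem neg_mul_exp_neg {Φ : ℝ} (hΦ : 0 < Φ) (y : ℝ) : -Φ * exp y < 0 := by
  rw [neg_mul, neg_neg_iff_pos]
  exact mul_pos hΦ (exp_pos y)

theorem exp_neg_mul_sub_lt_one {Φ b x : ℝ} (hΦ : 0 < Φ) (hbx : b < x) :
    exp (-Φ * (x - b)) < 1 := by
  rw [exp_lt_one_iff, neg_mul, neg_neg_iff_pos]
  exact mul_pos hΦ (sub_pos.mpr hbx)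

theorem stmt9_general (Φ δ₁ a b : ℝ) (hΦ : 0 < Φ) (hδ₁ : 0 < δ₁)
    (W₁ : ℝ → ℝ)
    (hW₁z : ∀ y < (0:ℝ), W₁ y = 0)
    (l : ℝ → ℝ) (hl : ∀ x, l x = ∫ z in x..b, Real.exp (-Φ * z) * W₁ (z - x))
    (lp : ℝ → ℝ) (hlp : ∀ x, HasDerivAt l (lp x) x)
    (hlpneg : ∀ x, lp x ≤ 0)
    (vp : ℝ → ℝ)
    (hvp : ∀ x, vp x = Real.exp (-Φ * (x - b)) + δ₁ * Φ * Real.exp (Φ * b) * l x) :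
    (∀ x, x > a →
      HasDerivAt vp (-Φ * Real.exp (-Φ * (x - b)) + δ₁ * Φ * Real.exp (Φ * b) * lp x) x ∧
      -Φ * Real.exp (-Φ * (x - b)) + δ₁ * Φ * Real.exp (Φ * b) * lp x ≤
        -Φ * Real.exp (-Φ * (x - b)) ∧
      -Φ * Real.exp (-Φ * (x - b)) < 0) ∧
    StrictAntiOn vp (Ioi a) ∧ vp b = 1 ∧ ∀ x > b, vp x < 1 := by
  have hc : 0 ≤ δ₁ * Φ * exp (Φ * b) := by positivity
  have hderiv (x : ℝ) : HasDerivAt vp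
      (-Φ * exp (-Φ * (x - b)) + δ₁ * Φ * exp (Φ * b) * lp x) x := by
    rw [funext hvp]
    exact hasDerivAt_exp_neg_mul_sub_add_const_mul (hlp x)
  have hle (x : ℝ) : -Φ * exp (-Φ * (x - b)) + δ₁ * Φ * exp (Φ * b) * lp x ≤
      -Φ * exp (-Φ * (x - b)) :=
    add_le_of_nonpos_right (mul_nonpos_of_nonneg_of_nonpos hc (hlpneg x))
  have hanti : StrictAnti vp := strictAnti_of_deriv_neg fun x => by
    rw [(hderiv x).deriv]
    exact (hle x).trans_lt (neg_mul_exp_neg hΦ _)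
  have hl_zero {x : ℝ} (hbx : b ≤ x) : l x = 0 := by
    rw [hl x, integral_mul_comp_sub_eq_zero_of_le hW₁z hbx]
  refine ⟨fun x _ => ⟨hderiv x, hle x, neg_mul_exp_neg hΦ _⟩, hanti.strictAntiOn _, ?_, ?_⟩
  · rw [hvp b, hl_zero le_rfl, sub_self, mul_zero, exp_zero, mul_zero, add_zero]
  · intro x hbx
    rw [hvp x, hl_zero hbx.le, mul_zero, add_zero]
    exact exp_neg_mul_sub_lt_one hΦ hbx

theorem stmt9 (Φ δ₁ a b : ℝ) (hΦ : 0 < Φ) (hδ₁ : 0 < δ₁) (hb : 0 < b) (hab : a < b)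
    (W₁ : ℝ → ℝ)
    (hW₁c : Continuous W₁) (hW₁nn : ∀ y, 0 ≤ W₁ y) (hW₁mono : Monotone W₁)
    (hW₁z : ∀ y < (0:ℝ), W₁ y = 0)
    (l : ℝ → ℝ) (hl : ∀ x, l x = ∫ z in x..b, Real.exp (-Φ * z) * W₁ (z - x))
    (lp : ℝ → ℝ) (hlp : ∀ x, HasDerivAt l (lp x) x)
    (hlpneg : ∀ x, lp x ≤ 0)
    (vp : ℝ → ℝ)
    (hvp : ∀ x, vp x = Real.exp (-Φ * (x - b)) + δ₁ * Φ * Real.exp (Φ * b) * l x) :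
    (∀ x, x > a →
      HasDerivAt vp (-Φ * Real.exp (-Φ * (x - b)) + δ₁ * Φ * Real.exp (Φ * b) * lp x) x ∧
      -Φ * Real.exp (-Φ * (x - b)) + δ₁ * Φ * Real.exp (Φ * b) * lp x ≤
        -Φ * Real.exp (-Φ * (x - b)) ∧
      -Φ * Real.exp (-Φ * (x - b)) < 0) ∧
    StrictAntiOn vp (Ioi a) ∧ vp b = 1 ∧ ∀ x > b, vp x < 1 :=
  stmt9_general Φ δ₁ a b hΦ hδ₁ W₁ hW₁z l hl lp hlp hlpneg vp hvp
end

section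
/- Let v : (0,∞) → ℝ be differentiable and concave, let 0 ≤ a ≤ b, and suppose v'(a+) ≤ β (with equality if a > 0), v'(b) ≤ 1 (with equality if b > 0), and 1 < β. Then for all x: if 0 < x < a then max over r₁ ∈ [0,δ₁] of r₁(1 - v'(x)) plus max over r₂ ∈ [0,δ₂] of r₂(v'(x) - β) equals δ₂(v'(x) - β); if a ≤ x < b it equals 0; and if x ≥ b it equals δ₁(1 - v'(x)). Here δ₁, δ₂ > 0. -/
/-! Concavity makes `v'` nonincreasing on `(0, ∞)`, so the one-sided derivatives at `a` and `b`
fix the signs of `1 - v'` and `v' - β` on each of the three regions, and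
`max_{0 ≤ r ≤ δ} r c = δ max(c, 0)`. At an endpoint `0`, where `v` need not be differentiable,
the mean value theorem bounds `v'(x)` by slopes of `v` from that endpoint, and these tend to the
right derivative there. -/

open Set Filter Topology

theorem iSup_Icc_mul_eq {δ : ℝ} (hδ : 0 ≤ δ) (c : ℝ) :
    ⨆ r : Icc (0:ℝ) δ, (r : ℝ) * c = δ * max c 0 := by
  have le_max : ∀ r : Icc (0:ℝ) δ, (r : ℝ) * c ≤ δ * max c 0 := fun ⟨r, hr0, hrδ⟩ =>
    calc r * c ≤ r * max c 0 := mul_le_mul_of_nonneg_left (le_max_left _ _) hr0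
      _ ≤ δ * max c 0 := mul_le_mul_of_nonneg_right hrδ (le_max_right _ _)
  obtain ⟨r₀, hr₀⟩ : ∃ r₀ : Icc (0:ℝ) δ, (r₀ : ℝ) * c = δ * max c 0 := by
    rcases le_total 0 c with hc | hc
    · exact ⟨⟨δ, hδ, le_rfl⟩, by rw [max_eq_left hc]⟩
    · exact ⟨⟨0, le_rfl, hδ⟩, by rw [max_eq_right hc, zero_mul, mul_zero]⟩
  exact IsGreatest.csSup_eq ⟨⟨r₀, hr₀⟩, forall_mem_range.2 le_max⟩

theorem AntitoneOn.deriv_le_of_hasDerivWithinAt_Ici {f : ℝ → ℝ} {c D x : ℝ}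
    (hf : DifferentiableOn ℝ f (Ioi c)) (hanti : AntitoneOn (deriv f) (Ioi c))
    (hD : HasDerivWithinAt f D (Ici c) c) (hcx : c < x) : deriv f x ≤ D := by
  have slope_tendsto : Tendsto (slope f c) (𝓝[>] c) (𝓝 D) :=
    (hasDerivWithinAt_iff_tendsto_slope' self_notMem_Ioi).1 (hD.mono Ioi_subset_Ici_self)
  refine ge_of_tendsto slope_tendsto ?_
  filter_upwards [Ioo_mem_nhdsGT hcx] with t ⟨hct, htx⟩
  have hcont : ContinuousOn f (Icc c t) := by
    intro y ⟨hcy, _⟩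
    rcases hcy.eq_or_lt with rfl | hcy
    · exact hD.continuousWithinAt.mono Icc_subset_Ici_self
    · exact ((hf y hcy).differentiableAt (Ioi_mem_nhds hcy)).continuousAt.continuousWithinAt
  obtain ⟨ξ, ⟨hcξ, hξt⟩, hξ⟩ :=
    exists_deriv_eq_slope' f hct hcont (hf.mono Ioo_subset_Ioi_self)
  exact hξ ▸ hanti hcξ (hct.trans htx) (hξt.trans htx).le

namespace ConcaveOn

variable {v : ℝ → ℝ} (hconc : ConcaveOn ℝ (Ioi 0) v)
  (hv : ∀ x ∈ Ioi (0:ℝ), DifferentiableAt ℝ v x)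
include hconc hv

theorem deriv_le_of_hasDerivWithinAt_Ici {c D x : ℝ} (hc : 0 ≤ c)
    (hD : HasDerivWithinAt v D (Ici c) c) (hcx : c ≤ x) (hx : 0 < x) : deriv v x ≤ D := by
  rcases hcx.eq_or_lt with rfl | hcx
  · exact ((uniqueDiffWithinAt_Ici c).eq_deriv _
      (hv c hx).hasDerivAt.hasDerivWithinAt hD).le
  · exact AntitoneOn.deriv_le_of_hasDerivWithinAt_Ici
      (fun y hy => (hv y (hc.trans_lt hy)).differentiableWithinAt)
      ((hconc.antitoneOn_deriv hv).mono fun y hy => hc.trans_lt hy) hD hcx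

theorem le_deriv_of_hasDerivWithinAt_Ici {c D x : ℝ} (hD : HasDerivWithinAt v D (Ici c) c)
    (hx : 0 < x) (hxc : x ≤ c) : D ≤ deriv v x := by
  have hc : 0 < c := hx.trans_le hxc
  rw [(uniqueDiffWithinAt_Ici c).eq_deriv _ hD (hv c hc).hasDerivAt.hasDerivWithinAt]
  exact hconc.antitoneOn_deriv hv hx hc hxc

end ConcaveOn

theorem stmt13 (a b β δ₁ δ₂ : ℝ) (ha : 0 ≤ a) (hab : a ≤ b)
    (hβ : 1 < β) (hδ₁ : 0 < δ₁) (hδ₂ : 0 < δ₂)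
    (v : ℝ → ℝ)
    (hv : ∀ x ∈ Ioi (0:ℝ), DifferentiableAt ℝ v x)
    (hconc : ConcaveOn ℝ (Ioi 0) v)
    (Da Db : ℝ)
    (hDa : HasDerivWithinAt v Da (Ici a) a) (hDaβ : Da ≤ β) (hDaeq : 0 < a → Da = β)
    (hDb : HasDerivWithinAt v Db (Ici b) b) (hDb1 : Db ≤ 1) (hDbeq : 0 < b → Db = 1) :
    ∀ x : ℝ,
      ((0 < x ∧ x < a) →
        (⨆ r : Icc (0:ℝ) δ₁, (r : ℝ) * (1 - deriv v x)) +
          (⨆ r : Icc (0:ℝ) δ₂, (r : ℝ) * (deriv v x - β)) = δ₂ * (deriv v x - β)) ∧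
      ((a ≤ x ∧ x < b ∧ 0 < x) →
        (⨆ r : Icc (0:ℝ) δ₁, (r : ℝ) * (1 - deriv v x)) +
          (⨆ r : Icc (0:ℝ) δ₂, (r : ℝ) * (deriv v x - β)) = 0) ∧
      ((b ≤ x ∧ 0 < x) →
        (⨆ r : Icc (0:ℝ) δ₁, (r : ℝ) * (1 - deriv v x)) +
          (⨆ r : Icc (0:ℝ) δ₂, (r : ℝ) * (deriv v x - β)) = δ₁ * (1 - deriv v x)) := by
  intro x
  simp only [iSup_Icc_mul_eq hδ₁.le, iSup_Icc_mul_eq hδ₂.le]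
  refine ⟨fun ⟨hx0, hxa⟩ => ?_, fun ⟨hax, hxb, hx0⟩ => ?_, fun ⟨hbx, hx0⟩ => ?_⟩
  · have hβx : β ≤ deriv v x :=
      hDaeq (hx0.trans hxa) ▸ hconc.le_deriv_of_hasDerivWithinAt_Ici hv hDa hx0 hxa.le
    rw [max_eq_right (by linarith), max_eq_left (by linarith)]
    ring
  · have h1x : 1 ≤ deriv v x :=
      hDbeq (hx0.trans hxb) ▸ hconc.le_deriv_of_hasDerivWithinAt_Ici hv hDb hx0 hxb.le
    have hxβ : deriv v x ≤ β :=
      (hconc.deriv_le_of_hasDerivWithinAt_Ici hv ha hDa hax hx0).trans hDaβ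
    rw [max_eq_right (by linarith), max_eq_right (by linarith)]
    ring
  · have hx1 : deriv v x ≤ 1 :=
      (hconc.deriv_le_of_hasDerivWithinAt_Ici hv (ha.trans hab) hDb hbx hx0).trans hDb1
    rw [max_eq_left (by linarith), max_eq_right (by linarith)]
    ring
end
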